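/- For a smooth function φ : ℝ → ℝ, the error of the look-around quadrature rule satisfies ∫_{a-h/2}^{a+h/2} φ(t) dt - (h/24)(φ(a-h) + 22φ(a) + φ(a+h)) = O(h^5) as h → 0; more precisely, if φ is C^4 with ‖φ⁗‖_∞ ≤ C on ℝ, then the error is bounded by a constant (depending only on C) times h^5. -/

import Mathlib

/-!
The rule integrates every cubic in `t - a` exactly: the odd monomials vanish on both sides by
symmetry, and `1` and `(t - a)²` are checked by hand. Hence the error of `φ` is the error of the
Taylor remainder `R = φ - P₃φ`, and Lagrange's form of the remainder gives
`|R t| ≤ C / 24 * |t - a|⁴`. On the integration interval this bounds the integral by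
`C / 24 * (h / 2)⁴ * h`, and at the nodes `a ± h` (`R a = 0`) the rule by `h / 24 * 2 * C / 24 * h⁴`;
together `7 C h⁵ / 1152`.
-/

open Set Finset intervalIntegral

noncomputable def lookAroundRule (f : ℝ → ℝ) (a h : ℝ) : ℝ :=
  h / 24 * (f (a - h) + 22 * f a + f (a + h))

noncomputable def lookAroundError (f : ℝ → ℝ) (a h : ℝ) : ℝ :=
  (∫ t in (a - h / 2)..(a + h / 2), f t) - lookAroundRule f a h

theorem taylorWithinEval_eq_univ {f : ℝ → ℝ} {n : ℕ} {s : Set ℝ} {x₀ : ℝ}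
    (hf : ContDiff ℝ n f) (hs : UniqueDiffOn ℝ s) (hx₀ : x₀ ∈ s) :
    taylorWithinEval f n s x₀ = taylorWithinEval f n univ x₀ := by
  ext x
  simp only [taylor_within_apply]
  refine sum_congr rfl fun k hk => ?_
  have hkn : (k : WithTop ℕ∞) ≤ n := by exact_mod_cast Nat.lt_succ_iff.mp (mem_range.mp hk)
  rw [iteratedDerivWithin_eq_iteratedDeriv hs ((hf.of_le hkn).contDiffAt) hx₀,
    iteratedDerivWithin_univ]

theorem taylorWithinEval_univ_eq_sum (f : ℝ → ℝ) (n : ℕ) (x₀ : ℝ) :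
    taylorWithinEval f n univ x₀ =
      fun x => ∑ k ∈ range (n + 1), (k.factorial : ℝ)⁻¹ * iteratedDeriv k f x₀ * (x - x₀) ^ k := by
  ext x
  simp only [taylor_within_apply, iteratedDerivWithin_univ, smul_eq_mul]
  exact sum_congr rfl fun k _ => by ring

theorem abs_sub_taylorWithinEval_univ_le {f : ℝ → ℝ} {n : ℕ} {C : ℝ}
    (hf : ContDiff ℝ (n + 1) f) (hbd : ∀ t, |iteratedDeriv (n + 1) f t| ≤ C) (x₀ x : ℝ) :
    |f x - taylorWithinEval f n univ x₀ x| ≤ C / (n + 1).factorial * |x - x₀| ^ (n + 1) := by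
  rcases eq_or_ne x₀ x with rfl | hx
  · simp
  obtain ⟨y, -, hy⟩ := taylor_mean_remainder_lagrange_iteratedDeriv hx hf.contDiffOn
  rw [← taylorWithinEval_eq_univ (hf.of_le (by exact_mod_cast Nat.le_succ n))
    (uniqueDiffOn_uIcc hx) left_mem_uIcc, hy, abs_div, abs_mul, abs_pow, Nat.abs_cast,
    div_mul_eq_mul_div]
  gcongr
  exact hbd y

theorem integral_sub_pow_eq_lookAroundRule {k : ℕ} (hk : k ≤ 3) (a h : ℝ) :
    ∫ t in (a - h / 2)..(a + h / 2), (t - a) ^ k = lookAroundRule (fun t => (t - a) ^ k) a h := by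
  rw [integral_comp_sub_right (fun t => t ^ k), integral_pow, lookAroundRule]
  interval_cases k <;> ring

theorem lookAroundError_sum_sub_pow (c : ℕ → ℝ) (a h : ℝ) :
    lookAroundError (fun t => ∑ k ∈ range 4, c k * (t - a) ^ k) a h = 0 := by
  have hmonomial : ∀ k ∈ range 4, (∫ t in (a - h / 2)..(a + h / 2), c k * (t - a) ^ k) =
      c k * lookAroundRule (fun t => (t - a) ^ k) a h := fun k hk => by
    rw [integral_const_mul,
      integral_sub_pow_eq_lookAroundRule (Nat.lt_succ_iff.mp (mem_range.mp hk))]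
  rw [lookAroundError,
    integral_finsetSum fun k _ => (by fun_prop : Continuous _).intervalIntegrable _ _,
    sum_congr rfl hmonomial]
  simp only [lookAroundRule, sum_range_succ, sum_range_zero]
  ring

theorem lookAroundError_sub {f g : ℝ → ℝ} (hf : Continuous f) (hg : Continuous g) (a h : ℝ) :
    lookAroundError (f - g) a h = lookAroundError f a h - lookAroundError g a h := by
  simp only [lookAroundError, Pi.sub_apply,
    integral_sub (hf.intervalIntegrable _ _) (hg.intervalIntegrable _ _), lookAroundRule]
  ring

theorem abs_lookAroundError_le {R : ℝ → ℝ} {M a h : ℝ}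
    (hbd : ∀ t, |R t| ≤ M * |t - a| ^ 4) (hh : 0 ≤ h) :
    |lookAroundError R a h| ≤ 7 / 48 * M * h ^ 5 := by
  have hM : 0 ≤ M := by simpa using (abs_nonneg _).trans (hbd (a + 1))
  have hint : |∫ t in (a - h / 2)..(a + h / 2), R t| ≤ M * (h / 2) ^ 4 * h := by
    have := norm_integral_le_of_norm_le_const (C := M * (h / 2) ^ 4) (f := R)
      (a := a - h / 2) (b := a + h / 2) fun t ht => ?_
    · simpa [show a + h / 2 - (a - h / 2) = h by ring, abs_of_nonneg hh] using this
    rw [uIoc_of_le (by linarith)] at ht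
    have : |t - a| ≤ h / 2 := abs_le.mpr ⟨by linarith [ht.1], by linarith [ht.2]⟩
    calc ‖R t‖ ≤ M * |t - a| ^ 4 := hbd t
      _ ≤ M * (h / 2) ^ 4 := by gcongr
  have hnodes : |lookAroundRule R a h| ≤ h / 24 * (2 * M * h ^ 4) := by
    have hm := hbd (a - h)
    have hc := hbd a
    have hp := hbd (a + h)
    simp only [sub_self, abs_zero, sub_sub_cancel_left, abs_neg, add_sub_cancel_left,
      abs_of_nonneg hh] at hm hc hp
    rw [lookAroundRule, abs_mul, abs_of_nonneg (by positivity)]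
    gcongr
    rw [abs_le] at hm hc hp ⊢
    constructor <;> linarith
  calc |lookAroundError R a h| ≤ |∫ t in (a - h / 2)..(a + h / 2), R t| + |lookAroundRule R a h| :=
        abs_sub _ _
    _ ≤ 7 / 48 * M * h ^ 5 := by linarith

/-- If `φ` is `C⁴` with `‖φ⁗‖_∞ ≤ C`, then the error of the look-around quadrature
rule is bounded by a constant depending only on `C` times `h^5`. -/
theorem lookAround_quadrature_error_order_five (C : ℝ) (hC : 0 ≤ C) :
    ∃ K : ℝ, 0 ≤ K ∧ ∀ (φ : ℝ → ℝ), ContDiff ℝ 4 φ →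
      (∀ t : ℝ, |iteratedDeriv 4 φ t| ≤ C) →
      ∀ (a : ℝ) (h : ℝ), 0 < h →
        |(∫ t in (a - h / 2)..(a + h / 2), φ t)
            - (h / 24) * (φ (a - h) + 22 * φ a + φ (a + h))| ≤ K * h ^ 5 := by
  refine ⟨7 / 48 * (C / 24), by positivity, fun φ hφ hbd a h hh => ?_⟩
  set P := taylorWithinEval φ 3 univ a
  have hP : P = fun t => ∑ k ∈ range 4, (k.factorial : ℝ)⁻¹ * iteratedDeriv k φ a * (t - a) ^ k :=
    taylorWithinEval_univ_eq_sum φ 3 a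
  have hP_cont : Continuous P := hP ▸ by fun_prop
  have hremainder : ∀ t, |(φ - P) t| ≤ C / 24 * |t - a| ^ 4 := fun t =>
    abs_sub_taylorWithinEval_univ_le (n := 3) (by exact_mod_cast hφ) hbd a t
  have hexact : lookAroundError φ a h = lookAroundError (φ - P) a h := by
    rw [lookAroundError_sub hφ.continuous hP_cont, hP, lookAroundError_sum_sub_pow, sub_zero]
  change |lookAroundError φ a h| ≤ _
  rw [hexact]
  exact abs_lookAroundError_le hremainder hh.le
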